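/- In the constructed PO-ALLOCATION-ADDITIVE instance arising from a 3CNF formula φ, if φ is unsatisfiable, then the allocation a is Pareto-optimal: no admissible allocation Pareto-dominates a. -/

import Mathlib

/-- A literal over variables `x_1, …, x_w`: a variable together with a polarity
(`true` = positive literal, `false` = negative literal). -/
abbrev Lit (w : ℕ) := Fin w × Bool

/-- The agents of the PO-ALLOCATION-ADDITIVE instance built from a 3CNF formula:
an agent `a_set(l)` for each literal `l`, an agent `a_{c_i}` for each clause, and
the two agents `a_unassigned` and `a_satisfied`. -/
inductive AgentPO (w w' : ℕ) where
  | aset (l : Lit w)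
  | ac (i : Fin w')
  | aun
  | asat
deriving DecidableEq, Fintype

/-- The resources of the PO-ALLOCATION-ADDITIVE instance: a resource `o_{c_i,l}` for
each clause `c_i` and literal `l ∈ c_i`, a resource `o_{x}` for each variable, a
resource `o_{c_i}` for each clause, and the resource `o_satisfied`. -/
inductive ResPO (w w' : ℕ) (φ : Fin w' → Finset (Lit w)) where
  | olit (x : Σ i : Fin w', {l : Lit w // l ∈ φ i})
  | ovar (x : Fin w)
  | ocl (i : Fin w')
  | osat
deriving DecidableEq, Fintype

/-- The utility coefficients of the constructed PO-ALLOCATION-ADDITIVE instance. -/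
noncomputable def coeffPO (w w' : ℕ) (φ : Fin w' → Finset (Lit w)) :
    AgentPO w w' → ResPO w w' φ → ℝ
  | .aset l, .olit ⟨_, l'⟩ => if (l' : Lit w) = l then 1 else 0
  | .aset l, .ovar x =>
      -- `a_set(l)` values `o_{x}` by the number of occurrences of `l` in the formula
      if l.1 = x then ((Finset.univ.filter fun i => l ∈ φ i).card : ℝ) else 0
  | .ac i, .olit ⟨i', _⟩ => if i' = i then 1 else 0
  | .ac i, .ocl i' => if i' = i then 1 else 0
  | .aun, .ovar _ => 1
  | .aun, .osat => (w : ℝ) + 1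
  | .asat, .ocl _ => 1
  | .asat, .osat => (w' : ℝ)
  | _, _ => 0

/-- The allocation `a` of the constructed instance: each `o_{c_i,l}` goes to `a_set(l)`,
each `o_{x}` goes to `a_unassigned`, each `o_{c_i}` goes to `a_{c_i}`, and `o_satisfied`
goes to `a_satisfied`. (An allocation maps each resource to at most one agent, which
makes it automatically admissible.) -/
def allocPO (w w' : ℕ) (φ : Fin w' → Finset (Lit w)) :
    ResPO w w' φ → Option (AgentPO w w')
  | .olit ⟨_, l⟩ => some (.aset l.1)
  | .ovar _ => some .aun
  | .ocl i => some (.ac i)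
  | .osat => some .asat

/-- The additive utility of agent `A` under an allocation: the sum of `A`'s coefficients
over the resources allocated to `A`. -/
noncomputable def utilPO (w w' : ℕ) (φ : Fin w' → Finset (Lit w))
    (al : ResPO w w' φ → Option (AgentPO w w')) (A : AgentPO w w') : ℝ :=
  ∑ o : ResPO w w' φ, if al o = some A then coeffPO w w' φ A o else 0

/-- `a'` Pareto-dominates `a`: no agent's utility decreases, some agent's utility
strictly increases. -/
def DominatesPO (w w' : ℕ) (φ : Fin w' → Finset (Lit w))
    (a' a : ResPO w w' φ → Option (AgentPO w w')) : Prop :=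
  (∀ A, utilPO w w' φ a A ≤ utilPO w w' φ a' A) ∧
  ∃ A, utilPO w w' φ a A < utilPO w w' φ a' A

/-- An allocation is Pareto-optimal if no (admissible) allocation Pareto-dominates it. -/
def ParetoOptPO (w w' : ℕ) (φ : Fin w' → Finset (Lit w))
    (a : ResPO w w' φ → Option (AgentPO w w')) : Prop :=
  ¬ ∃ a' : ResPO w w' φ → Option (AgentPO w w'), DominatesPO w w' φ a' a

/-- Satisfiability of the 3CNF formula `φ`: some truth assignment makes at least one
literal of every clause true. -/
def SatisfiablePO (w w' : ℕ) (φ : Fin w' → Finset (Lit w)) : Prop :=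
  ∃ v : Fin w → Bool, ∀ i : Fin w', ∃ l ∈ φ i, v l.1 = l.2

/-! Let `a'` weakly dominate `a`. If `a'` still gives `o_sat` to `a_sat`, then `a_un` can only
reach utility `w` by keeping every `o_x`; hence each `a_set(l)` must keep all the `o_{c,l}`,
hence each `a_c` must keep `o_c`, so `a' = a` and no agent improves strictly. Otherwise `a_sat`
must collect every `o_c`, so each `a_c` must take some `o_{c,l}` with `l ∈ c`, and the owner
`a_set(l)` of that resource can only be compensated by `o_x` for the variable `x` of `l`. As `o_x`
goes to at most one of `a_set(x)`, `a_set(¬x)`, reading off which one gets it gives an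
assignment satisfying every clause. -/

open Finset

section

variable {w w' : ℕ} {φ : Fin w' → Finset (Lit w)}

abbrev OccPO (w w' : ℕ) (φ : Fin w' → Finset (Lit w)) := Σ i : Fin w', {l : Lit w // l ∈ φ i}

def ResPO.equivSum (w w' : ℕ) (φ : Fin w' → Finset (Lit w)) :
    ResPO w w' φ ≃ OccPO w w' φ ⊕ Fin w ⊕ Fin w' ⊕ Unit where
  toFun
    | .olit x => .inl x
    | .ovar x => .inr (.inl x)
    | .ocl i => .inr (.inr (.inl i))
    | .osat => .inr (.inr (.inr ()))
  invFun
    | .inl x => .olit x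
    | .inr (.inl x) => .ovar x
    | .inr (.inr (.inl i)) => .ocl i
    | .inr (.inr (.inr _)) => .osat
  left_inv := by rintro (_ | _ | _ | _) <;> rfl
  right_inv := by rintro (_ | _ | _ | ⟨⟩) <;> rfl

theorem ResPO.sum_eq {M : Type*} [AddCommMonoid M] (f : ResPO w w' φ → M) :
    ∑ o, f o = (∑ x, f (.olit x)) + ((∑ x, f (.ovar x)) + ((∑ i, f (.ocl i)) + f .osat)) := by
  rw [← (ResPO.equivSum w w' φ).symm.sum_comp]
  simp [Fintype.sum_sum_type, ResPO.equivSum]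

section Utility

variable (al : ResPO w w' φ → Option (AgentPO w w'))

theorem utilPO_aun : utilPO w w' φ al .aun =
    (#{x | al (.ovar x) = some .aun} : ℝ) + if al .osat = some .aun then (w : ℝ) + 1 else 0 := by
  simp [utilPO, ResPO.sum_eq, coeffPO, sum_boole]

theorem utilPO_asat : utilPO w w' φ al .asat =
    (#{i | al (.ocl i) = some .asat} : ℝ) + if al .osat = some .asat then (w' : ℝ) else 0 := by
  simp [utilPO, ResPO.sum_eq, coeffPO, sum_boole]

theorem utilPO_ac (i : Fin w') : utilPO w w' φ al (.ac i) =
    (#{x | x.1 = i ∧ al (.olit x) = some (.ac i)} : ℝ) +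
      if al (.ocl i) = some (.ac i) then 1 else 0 := by
  simp only [utilPO, coeffPO, ResPO.sum_eq, ite_self, sum_const_zero, add_zero, zero_add]
  congr 1
  · simp [← ite_and, sum_boole, and_comm]
  · rw [Fintype.sum_eq_single i] <;> simp +contextual

theorem utilPO_aset (l : Lit w) : utilPO w w' φ al (.aset l) =
    (#{x | x.2.1 = l ∧ al (.olit x) = some (.aset l)} : ℝ) +
      if al (.ovar l.1) = some (.aset l) then (#{i | l ∈ φ i} : ℝ) else 0 := by
  simp only [utilPO, coeffPO, ResPO.sum_eq, ite_self, sum_const_zero, add_zero]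
  congr 1
  · simp [← ite_and, sum_boole, and_comm]
  · rw [Fintype.sum_eq_single l.1] <;> simp +contextual [eq_comm]

end Utility

section Domination

variable {a' : ResPO w w' φ → Option (AgentPO w w')}

theorem alloc_ovar_eq_aun_of_utilPO_le
    (h : utilPO w w' φ (allocPO w w' φ) .aun ≤ utilPO w w' φ a' .aun)
    (hsat : a' .osat ≠ some .aun) (x : Fin w) : a' (.ovar x) = some .aun := by
  rw [utilPO_aun, utilPO_aun, if_neg hsat] at h
  have hcard : #{x | a' (.ovar x) = some .aun} = #(univ : Finset (Fin w)) :=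
    (card_filter_le _ _).antisymm (by simpa [allocPO] using h)
  exact card_filter_eq_iff.1 hcard x (mem_univ x)

theorem alloc_ocl_eq_asat_of_utilPO_le
    (h : utilPO w w' φ (allocPO w w' φ) .asat ≤ utilPO w w' φ a' .asat)
    (hsat : a' .osat ≠ some .asat) (i : Fin w') : a' (.ocl i) = some .asat := by
  rw [utilPO_asat, utilPO_asat, if_neg hsat] at h
  have hcard : #{i | a' (.ocl i) = some .asat} = #(univ : Finset (Fin w')) :=
    (card_filter_le _ _).antisymm (by simpa [allocPO] using h)
  exact card_filter_eq_iff.1 hcard i (mem_univ i)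

theorem exists_alloc_olit_eq_ac_of_utilPO_le {i : Fin w'}
    (h : utilPO w w' φ (allocPO w w' φ) (.ac i) ≤ utilPO w w' φ a' (.ac i))
    (hcl : a' (.ocl i) ≠ some (.ac i)) :
    ∃ x, x.1 = i ∧ a' (.olit x) = some (.ac i) := by
  rw [utilPO_ac, utilPO_ac, if_neg hcl] at h
  have hpos : 0 < #{x | x.1 = i ∧ a' (.olit x) = some (.ac i)} := by
    exact_mod_cast (by simpa [allocPO] using h)
  obtain ⟨x, hx⟩ := card_pos.1 hpos
  exact ⟨x, (mem_filter.1 hx).2⟩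

theorem alloc_olit_eq_aset_of_utilPO_le {l : Lit w}
    (h : utilPO w w' φ (allocPO w w' φ) (.aset l) ≤ utilPO w w' φ a' (.aset l))
    (hvar : a' (.ovar l.1) ≠ some (.aset l)) (x : OccPO w w' φ)
    (hx : x.2.1 = l) : a' (.olit x) = some (.aset l) := by
  rw [utilPO_aset, utilPO_aset, if_neg hvar] at h
  have hcard : #(({x | x.2.1 = l} : Finset (OccPO w w' φ)).filter
      fun x => a' (.olit x) = some (.aset l)) = #({x | x.2.1 = l} : Finset (OccPO w w' φ)) := by
    refine (card_filter_le _ _).antisymm ?_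
    rw [filter_filter]
    simpa [allocPO] using h
  exact card_filter_eq_iff.1 hcard x (by simpa using hx)

theorem eq_allocPO_of_utilPO_le
    (hle : ∀ A, utilPO w w' φ (allocPO w w' φ) A ≤ utilPO w w' φ a' A)
    (hsat : a' .osat = some .asat) : a' = allocPO w w' φ := by
  have hvar (x : Fin w) : a' (.ovar x) = some .aun :=
    alloc_ovar_eq_aun_of_utilPO_le (hle _) (by simp [hsat]) x
  have hlit (x : OccPO w w' φ) : a' (.olit x) = some (.aset x.2) :=
    alloc_olit_eq_aset_of_utilPO_le (hle _) (by simp [hvar]) x rfl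
  have hcl (i : Fin w') : a' (.ocl i) = some (.ac i) := by
    by_contra hcl
    obtain ⟨x, -, hx⟩ := exists_alloc_olit_eq_ac_of_utilPO_le (hle _) hcl
    simp [hlit] at hx
  funext o
  cases o with
  | olit x => exact hlit x
  | ovar x => exact hvar x
  | ocl i => exact hcl i
  | osat => exact hsat

def assignmentOf (al : ResPO w w' φ → Option (AgentPO w w')) (x : Fin w) : Bool :=
  decide (al (.ovar x) = some (.aset (x, true)))

theorem assignmentOf_eq_of_alloc_ovar {al : ResPO w w' φ → Option (AgentPO w w')} {l : Lit w}
    (h : al (.ovar l.1) = some (.aset l)) : assignmentOf al l.1 = l.2 := by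
  obtain ⟨x, _ | _⟩ := l <;> simp_all [assignmentOf]

theorem satisfiablePO_of_utilPO_le
    (hle : ∀ A, utilPO w w' φ (allocPO w w' φ) A ≤ utilPO w w' φ a' A)
    (hsat : a' .osat ≠ some .asat) : SatisfiablePO w w' φ := by
  have hcl (i : Fin w') : a' (.ocl i) = some .asat :=
    alloc_ocl_eq_asat_of_utilPO_le (hle _) hsat i
  refine ⟨assignmentOf a', fun i => ?_⟩
  obtain ⟨x, rfl, hx⟩ := exists_alloc_olit_eq_ac_of_utilPO_le (hle (.ac i)) (by simp [hcl])
  have hvar : a' (.ovar x.2.1.1) = some (.aset x.2) := by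
    by_contra hvar
    simpa [hx] using alloc_olit_eq_aset_of_utilPO_le (hle _) hvar x rfl
  exact ⟨x.2, x.2.2, assignmentOf_eq_of_alloc_ovar hvar⟩

end Domination

end

theorem allocPO_paretoOptimal_of_unsatisfiable_general (w w' : ℕ)
    (φ : Fin w' → Finset (Lit w))
    (hunsat : ¬ SatisfiablePO w w' φ) :
    ParetoOptPO w w' φ (allocPO w w' φ) := by
  rintro ⟨a', hle, A, hlt⟩
  by_cases hsat : a' .osat = some .asat
  · rw [eq_allocPO_of_utilPO_le hle hsat] at hlt
    exact hlt.false
  · exact hunsat (satisfiablePO_of_utilPO_le hle hsat)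

/-- If the 3CNF formula `φ` (each clause has at most 3 literals) is unsatisfiable, then
the allocation `a` of the constructed PO-ALLOCATION-ADDITIVE instance is
Pareto-optimal: no admissible allocation Pareto-dominates it. -/
theorem allocPO_paretoOptimal_of_unsatisfiable (w w' : ℕ)
    (φ : Fin w' → Finset (Lit w)) (hφ : ∀ i, (φ i).card ≤ 3)
    (hunsat : ¬ SatisfiablePO w w' φ) :
    ParetoOptPO w w' φ (allocPO w w' φ) :=
  allocPO_paretoOptimal_of_unsatisfiable_general w w' φ hunsat
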